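/- Let G be a group with a central series G = G_1 ≥ G_2 ≥ ⋯ ≥ G_n ≥ G_{n+1} = {1} and elements g_i ∈ G_i such that each factor G_i/G_{i+1} is infinite cyclic generated by the image of g_i. Then there exists a family of integers t = (t_{i,j,k})_{1 ≤ i < j < k ≤ n} such that the normal form map N_t : ℤ^n → G(t) is bijective (i.e., G(t) is consistent) and there is a group isomorphism G(t) ≅ G mapping a_i to g_i for each 1 ≤ i ≤ n. -/

import Mathlib

/-!
Every element of `Γ` is uniquely a normal form `g_1^{x_1} ⋯ g_n^{x_n}`: the exponent of `g_m` in
an element of `H_m` is read off in the infinite cyclic factor `H_m / H_{m+1}`. By centrality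
`(g_i g_j)⁻¹ (g_j g_i) ∈ H_{j+1}`, so its normal form only involves the `g_k` with `k > j`; its
exponents are the `t_{i,j,k}`. The relations of `G(t)` then hold in `Γ`, giving
`φ : G(t) → Γ`, `a_i ↦ g_i`, with `φ ∘ N_t` the normal form map of `Γ`. Conversely the relations
alone let one collect any element of `G(t)` into normal form, because each `a_m` normalizes the
subgroup generated by `a_{m+1}, …, a_n`; so `N_t` is surjective, and since `φ ∘ N_t` is bijective,
both `N_t` and `φ` are bijective.
-/

namespace HallPoly

/-- The ordered product `g_1^{e_1} ⋯ g_n^{e_n}` taken in increasing order of indices. -/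
def prodPow {Γ : Type*} [Group Γ] (n : ℕ) (g : Fin n → Γ) (e : Fin n → ℤ) : Γ :=
  ((List.finRange n).map fun k => g k ^ e k).prod

/-- The relators of the presented group `G(t)`:
`(a_i · a_j · a_{j+1}^{t_{i,j,j+1}} ⋯ a_n^{t_{i,j,n}})⁻¹ · (a_j · a_i)` for `1 ≤ i < j ≤ n`. -/
def rels (n : ℕ) (t : Fin n → Fin n → Fin n → ℤ) : Set (FreeGroup (Fin n)) :=
  { r | ∃ i j : Fin n, i < j ∧
      r = (FreeGroup.of i * FreeGroup.of j *
            prodPow n FreeGroup.of (fun k => if j < k then t i j k else 0))⁻¹ *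
          (FreeGroup.of j * FreeGroup.of i) }

/-- The presented group `G(t)` with generators `a_1, …, a_n` and relations
`a_j·a_i = a_i·a_j·a_{j+1}^{t_{i,j,j+1}} ⋯ a_n^{t_{i,j,n}}` for `1 ≤ i < j ≤ n`. -/
abbrev G (n : ℕ) (t : Fin n → Fin n → Fin n → ℤ) : Type := PresentedGroup (rels n t)

/-- The generators `a_1, …, a_n` of `G(t)`. -/
def a (n : ℕ) (t : Fin n → Fin n → Fin n → ℤ) (i : Fin n) : G n t :=
  PresentedGroup.of i

/-- The normal form map `N_t : ℤⁿ → G(t)`, `x ↦ a_1^{x_1} ⋯ a_n^{x_n}`. -/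
def N (n : ℕ) (t : Fin n → Fin n → Fin n → ℤ) (x : Fin n → ℤ) : G n t :=
  prodPow n (a n t) x

section ProdPow

variable {Γ : Type*} [Group Γ] {n : ℕ}

def VanishesBelow (m : ℕ) (x : Fin n → ℤ) : Prop :=
  ∀ k : Fin n, (k : ℕ) < m → x k = 0

lemma map_prodPow {Γ' : Type*} [Group Γ'] (f : Γ →* Γ') (g : Fin n → Γ) (x : Fin n → ℤ) :
    f (prodPow n g x) = prodPow n (fun k => f (g k)) x := by
  simp only [prodPow, map_list_prod, List.map_map, Function.comp_def, map_zpow]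

lemma prodPow_zero (g : Fin n → Γ) : prodPow n g 0 = 1 :=
  List.prod_eq_one (by simp)

lemma prodPow_mem {S : Subgroup Γ} {m : ℕ} {g : Fin n → Γ} {x : Fin n → ℤ}
    (hg : ∀ k : Fin n, m ≤ k → g k ∈ S) (hx : VanishesBelow m x) : prodPow n g x ∈ S := by
  refine S.list_prod_mem fun _ hz => ?_
  obtain ⟨k, -, rfl⟩ := List.mem_map.mp hz
  rcases lt_or_ge (k : ℕ) m with hk | hk
  · simp [hx k hk]
  · exact zpow_mem (hg k hk) _

lemma list_prod_map_zpow_update (g : Fin n → Γ) {x : Fin n → ℤ} {m : Fin n}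
    (hx : VanishesBelow (m + 1) x) (e : ℤ) {l : List (Fin n)} (hl : l.Pairwise (· < ·)) :
    (l.map fun k => g k ^ Function.update x m e k).prod
      = (if m ∈ l then g m ^ e else 1) * (l.map fun k => g k ^ x k).prod := by
  induction l with
  | nil => simp
  | cons k l ih =>
    obtain ⟨hkl, hl⟩ := List.pairwise_cons.mp hl
    simp only [List.map_cons, List.prod_cons, List.mem_cons, ih hl]
    rcases lt_trichotomy k m with hkm | rfl | hmk
    · have hk : x k = 0 := hx k (by omega)
      simp [hkm.ne, hkm.ne', hk]
    · have hkl' : k ∉ l := fun h => lt_irrefl k (hkl k h)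
      simp [hx k (by omega), hkl']
    · have hml : m ∉ l := fun h => lt_asymm hmk (hkl m h)
      simp [hmk.ne, hmk.ne', hml]

lemma prodPow_update (g : Fin n → Γ) {x : Fin n → ℤ} {m : Fin n}
    (hx : VanishesBelow (m + 1) x) (e : ℤ) :
    prodPow n g (Function.update x m e) = g m ^ e * prodPow n g x := by
  simpa [prodPow] using list_prod_map_zpow_update g hx e (List.pairwise_lt_finRange n)

end ProdPow

section Series

open scoped commutatorElement

variable {Γ : Type*} [Group Γ]

lemma existsUnique_zpow_inv_mul_mem {K L : Subgroup Γ} {h : Γ} (hh : h ∈ K)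
    (hcyc : Function.Bijective fun m : ℤ =>
      (QuotientGroup.mk ((⟨h, hh⟩ : K) ^ m) : K ⧸ L.subgroupOf K))
    {z : Γ} (hz : z ∈ K) : ∃! e : ℤ, (h ^ e)⁻¹ * z ∈ L := by
  have hcoset : ∀ e : ℤ, (QuotientGroup.mk ((⟨h, hh⟩ : K) ^ e) : K ⧸ L.subgroupOf K)
      = QuotientGroup.mk ⟨z, hz⟩ ↔ (h ^ e)⁻¹ * z ∈ L := fun e => by
    rw [QuotientGroup.eq, Subgroup.mem_subgroupOf]
    simp
  obtain ⟨e, he⟩ := hcyc.2 (QuotientGroup.mk ⟨z, hz⟩)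
  exact ⟨e, (hcoset e).mp he, fun e' he' => hcyc.1 (((hcoset e').mpr he').trans he.symm)⟩

lemma inv_mul_mul_swap_mem_of_commutator_le {K L : Subgroup Γ}
    (hKL : ⁅(⊤ : Subgroup Γ), K⁆ ≤ L) (x : Γ) {y : Γ} (hy : y ∈ K) : (x * y)⁻¹ * (y * x) ∈ L := by
  have hxy : (x * y)⁻¹ * (y * x) = ⁅y⁻¹, x⁻¹⁆ := by
    rw [commutatorElement_def]
    group
  rw [hxy]
  apply hKL
  rw [Subgroup.commutator_comm]
  exact Subgroup.commutator_mem_commutator (inv_mem hy) (Subgroup.mem_top _)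

variable {n : ℕ} {H : ℕ → Subgroup Γ} {g : Fin n → Γ}

lemma mem_of_le_of_descending (hdesc : ∀ i : ℕ, i < n → H (i + 1) ≤ H i)
    (hg : ∀ i : Fin n, g i ∈ H i) {m : ℕ} {k : Fin n} (hmk : m ≤ k) : g k ∈ H m := by
  suffices ∀ j, m ≤ j → j ≤ n → H j ≤ H m from this k hmk k.isLt.le (hg k)
  intro j hmj
  induction j, hmj using Nat.le_induction with
  | base => exact fun _ => le_rfl
  | succ j _ ih => exact fun hj => (hdesc j (by omega)).trans (ih (by omega))

lemma existsUnique_prodPow_of_mem (hHn : H n = ⊥)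
    (hdesc : ∀ i : ℕ, i < n → H (i + 1) ≤ H i) (hg : ∀ i : Fin n, g i ∈ H i)
    (hfactor : ∀ i : Fin n, ∀ z ∈ H i, ∃! e : ℤ, (g i ^ e)⁻¹ * z ∈ H (i + 1))
    {m : ℕ} (hm : m ≤ n) {z : Γ} (hz : z ∈ H m) :
    ∃! x : Fin n → ℤ, VanishesBelow m x ∧ prodPow n g x = z := by
  induction hm using Nat.decreasingInduction generalizing z with
  | self =>
    obtain rfl : z = 1 := by simpa [hHn] using hz
    refine ⟨0, ⟨fun _ _ => rfl, prodPow_zero g⟩, fun x ⟨hx, _⟩ => ?_⟩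
    exact funext fun k => hx k k.isLt
  | of_succ m hm ih =>
    let i : Fin n := ⟨m, hm⟩
    obtain ⟨e, he, he_uniq⟩ := hfactor i z hz
    obtain ⟨x, ⟨hx, hxz⟩, hx_uniq⟩ := ih he
    refine ⟨Function.update x i e, ⟨fun k hk => ?_, ?_⟩, fun y ⟨hy, hyz⟩ => ?_⟩
    · rw [Function.update_of_ne (Fin.ne_of_lt hk)]
      exact hx k (by omega)
    · rw [prodPow_update g hx, hxz]
      group
    · have hy' : VanishesBelow (m + 1) (Function.update y i 0) := fun k hk => by
        rcases eq_or_ne k i with rfl | hki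
        · simp
        · rw [Function.update_of_ne hki]
          exact hy k (by have : (k : ℕ) ≠ m := fun h => hki (Fin.ext h); omega)
      have hsplit : y = Function.update (Function.update y i 0) i (y i) := by simp
      rw [hsplit, prodPow_update g hy'] at hyz
      have hyi : (g i ^ y i)⁻¹ * z = prodPow n g (Function.update y i 0) := by
        rw [← hyz]
        group
      have hrest : prodPow n g (Function.update y i 0) ∈ H (m + 1) :=
        prodPow_mem (fun k hk => mem_of_le_of_descending hdesc hg hk) hy'
      have hyi_eq : y i = e := he_uniq _ (by beta_reduce; rwa [hyi])
      rw [hsplit, hx_uniq _ ⟨hy', by rw [← hyi, hyi_eq]⟩, hyi_eq]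

lemma prodPow_bijective_of_series (hH0 : H 0 = ⊤) (hHn : H n = ⊥)
    (hdesc : ∀ i : ℕ, i < n → H (i + 1) ≤ H i) (hg : ∀ i : Fin n, g i ∈ H i)
    (hfactor : ∀ i : Fin n, ∀ z ∈ H i, ∃! e : ℤ, (g i ^ e)⁻¹ * z ∈ H (i + 1)) :
    Function.Bijective (prodPow n g) := by
  refine (Function.bijective_iff_existsUnique _).mpr fun z => ?_
  have hz : z ∈ H 0 := hH0 ▸ Subgroup.mem_top z
  obtain ⟨x, ⟨-, hx⟩, hx_uniq⟩ :=
    existsUnique_prodPow_of_mem hHn hdesc hg hfactor n.zero_le hz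
  exact ⟨x, hx, fun y hy => hx_uniq y ⟨fun _ h => absurd h (Nat.not_lt_zero _), hy⟩⟩

end Series

section Collection

variable {Γ : Type*} [Group Γ] {n : ℕ}

lemma conj_mem_of_forall_mem_closure {s : Set Γ} {K : Subgroup Γ} {c : Γ}
    (hs : ∀ x ∈ s, c * x * c⁻¹ ∈ K) {y : Γ} (hy : y ∈ Subgroup.closure s) :
    c * y * c⁻¹ ∈ K := by
  have : Subgroup.closure s ≤ K.comap (MulAut.conj c).toMonoidHom :=
    (Subgroup.closure_le _).mpr fun x hx => by simpa using hs x hx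
  simpa using this hy

lemma mem_normalizer_of_conj_mem {K : Subgroup Γ} {c : Γ}
    (h₁ : ∀ y ∈ K, c * y * c⁻¹ ∈ K) (h₂ : ∀ y ∈ K, c⁻¹ * y * c ∈ K) :
    c ∈ Subgroup.normalizer (K : Set Γ) :=
  Subgroup.mem_normalizer_iff.mpr fun y =>
    ⟨h₁ y, fun hy => by simpa [mul_assoc] using h₂ _ hy⟩

def tailSubgroup (a : Fin n → Γ) (m : ℕ) : Subgroup Γ :=
  Subgroup.closure (a '' {k | m ≤ (k : ℕ)})

variable (a : Fin n → Γ)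

lemma mem_tailSubgroup {m : ℕ} {k : Fin n} (h : m ≤ k) : a k ∈ tailSubgroup a m :=
  Subgroup.subset_closure ⟨k, h, rfl⟩

lemma tailSubgroup_anti {m m' : ℕ} (h : m ≤ m') : tailSubgroup a m' ≤ tailSubgroup a m :=
  Subgroup.closure_mono (Set.image_mono fun _ hk => h.trans hk)

lemma tailSubgroup_self : tailSubgroup a n = ⊥ := by
  have : {k : Fin n | n ≤ (k : ℕ)} = ∅ :=
    Set.eq_empty_of_forall_notMem fun k hk => absurd k.isLt (not_lt.mpr hk)
  rw [tailSubgroup, this, Set.image_empty, Subgroup.closure_empty]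

lemma tailSubgroup_eq_zpowers_sup (m : Fin n) :
    tailSubgroup a m = Subgroup.zpowers (a m) ⊔ tailSubgroup a (m + 1) := by
  have : {k : Fin n | (m : ℕ) ≤ k} = {m} ∪ {k : Fin n | (m : ℕ) + 1 ≤ k} := by
    ext k
    simp only [Set.mem_ofPred_eq, Set.mem_union, Set.mem_singleton_iff, Fin.ext_iff]
    omega
  rw [tailSubgroup, this, Set.image_union, Subgroup.closure_union, Set.image_singleton,
    ← Subgroup.zpowers_eq_closure, tailSubgroup]

variable {a}
  (hrel : ∀ i j : Fin n, i < j → (a i * a j)⁻¹ * (a j * a i) ∈ tailSubgroup a (j + 1))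
include hrel

lemma inv_conj_mem_tailSubgroup {i j : Fin n} (hij : i < j) :
    (a i)⁻¹ * a j * a i ∈ tailSubgroup a (i + 1) := by
  have : (a i)⁻¹ * a j * a i = a j * ((a i * a j)⁻¹ * (a j * a i)) := by group
  rw [this]
  exact mul_mem (mem_tailSubgroup a hij)
    (tailSubgroup_anti a (by omega) (hrel i j hij))

lemma conj_mem_tailSubgroup {i j : Fin n} (hij : i < j) :
    a i * a j * (a i)⁻¹ ∈ tailSubgroup a (i + 1) := by
  induction j using WellFoundedGT.induction with
  | _ j ih =>
    have hconj : a i * a j * (a i)⁻¹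
        = a j * (a i * ((a i * a j)⁻¹ * (a j * a i)) * (a i)⁻¹)⁻¹ := by group
    -- the correction term only involves generators `a k` with `k > j`, handled by induction
    have hw : a i * ((a i * a j)⁻¹ * (a j * a i)) * (a i)⁻¹ ∈ tailSubgroup a (i + 1) := by
      refine conj_mem_of_forall_mem_closure (fun x hx => ?_) (hrel i j hij)
      obtain ⟨k, hk, rfl⟩ := hx
      exact ih k hk (hij.trans hk)
    rw [hconj]
    exact mul_mem (mem_tailSubgroup a hij) (inv_mem hw)

lemma mem_normalizer_tailSubgroup (i : Fin n) :
    a i ∈ Subgroup.normalizer (tailSubgroup a (i + 1) : Set Γ) := by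
  refine mem_normalizer_of_conj_mem (fun y hy => ?_) (fun y hy => ?_)
  · refine conj_mem_of_forall_mem_closure (fun x hx => ?_) hy
    obtain ⟨k, hk, rfl⟩ := hx
    exact conj_mem_tailSubgroup hrel hk
  · simpa using conj_mem_of_forall_mem_closure (c := (a i)⁻¹) (fun x hx => by
      obtain ⟨k, hk, rfl⟩ := hx
      simpa using inv_conj_mem_tailSubgroup hrel hk) hy

lemma exists_zpow_mul_of_mem_tailSubgroup (i : Fin n) {z : Γ} (hz : z ∈ tailSubgroup a i) :
    ∃ e : ℤ, ∃ y ∈ tailSubgroup a (i + 1), a i ^ e * y = z := by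
  have hle : Subgroup.zpowers (a i) ≤ Subgroup.normalizer (tailSubgroup a (i + 1) : Set Γ) :=
    Subgroup.zpowers_le.mpr (mem_normalizer_tailSubgroup hrel i)
  rw [tailSubgroup_eq_zpowers_sup, ← SetLike.mem_coe,
    Subgroup.coe_mul_of_left_le_normalizer_right _ _ hle] at hz
  obtain ⟨_, ⟨e, rfl⟩, y, hy, rfl⟩ := hz
  exact ⟨e, y, hy, rfl⟩

lemma exists_prodPow_of_mem_tailSubgroup {m : ℕ} (hm : m ≤ n) {z : Γ}
    (hz : z ∈ tailSubgroup a m) :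
    ∃ x : Fin n → ℤ, VanishesBelow m x ∧ prodPow n a x = z := by
  induction hm using Nat.decreasingInduction generalizing z with
  | self =>
    obtain rfl : z = 1 := by simpa [tailSubgroup_self] using hz
    exact ⟨0, fun _ _ => rfl, prodPow_zero a⟩
  | of_succ m hm ih =>
    let i : Fin n := ⟨m, hm⟩
    obtain ⟨e, y, hy, rfl⟩ := exists_zpow_mul_of_mem_tailSubgroup hrel i hz
    obtain ⟨x, hx, rfl⟩ := ih hy
    refine ⟨Function.update x i e, fun k hk => ?_, prodPow_update a hx e⟩
    rw [Function.update_of_ne (Fin.ne_of_lt hk)]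
    exact hx k (by omega)

lemma prodPow_surjective_of_closure_eq_top (htop : Subgroup.closure (Set.range a) = ⊤) :
    Function.Surjective (prodPow n a) := fun z => by
  have hz : z ∈ tailSubgroup a 0 := by simp [tailSubgroup, htop]
  obtain ⟨x, -, hx⟩ := exists_prodPow_of_mem_tailSubgroup hrel n.zero_le hz
  exact ⟨x, hx⟩

end Collection

section Presentation

variable {n : ℕ} {t : Fin n → Fin n → Fin n → ℤ}

lemma ite_lt_eq_of_vanishesBelow {j : Fin n} {x : Fin n → ℤ} (hx : VanishesBelow (j + 1) x) :
    (fun k => if j < k then x k else 0) = x :=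
  funext fun k => by
    split_ifs with hjk
    · rfl
    · exact (hx k (by rw [Fin.not_lt] at hjk; omega)).symm

lemma a_mul_a_of_lt {i j : Fin n} (hij : i < j) :
    a n t j * a n t i
      = a n t i * a n t j * prodPow n (a n t) (fun k => if j < k then t i j k else 0) := by
  have h := PresentedGroup.one_of_mem (rels := rels n t) ⟨i, j, hij, rfl⟩
  rw [map_mul, map_inv, inv_mul_eq_one, map_mul, map_mul, map_mul, map_prodPow] at h
  exact h.symm

lemma N_surjective : Function.Surjective (N n t) := by
  refine prodPow_surjective_of_closure_eq_top (fun i j hij => ?_)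
    (PresentedGroup.closure_range_of _)
  rw [a_mul_a_of_lt hij, inv_mul_cancel_left]
  refine prodPow_mem (fun k hk => mem_tailSubgroup _ hk) fun k hk => if_neg ?_
  rw [Fin.not_lt]
  omega

lemma lift_eq_one_of_mem_rels {Γ : Type*} [Group Γ] {g : Fin n → Γ}
    (hvan : ∀ i j : Fin n, VanishesBelow (j + 1) (t i j))
    (ht : ∀ i j : Fin n, i < j → prodPow n g (t i j) = (g i * g j)⁻¹ * (g j * g i)) :
    ∀ r ∈ rels n t, FreeGroup.lift g r = 1 := by
  rintro _ ⟨i, j, hij, rfl⟩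
  rw [map_mul, map_inv, inv_mul_eq_one, map_mul, map_mul, map_mul, map_prodPow]
  simp only [FreeGroup.lift_apply_of]
  rw [ite_lt_eq_of_vanishesBelow (hvan i j), ht i j hij]
  group

end Presentation

theorem exists_consistent_presentation_general {Γ : Type*} [Group Γ] (n : ℕ)
    (H : ℕ → Subgroup Γ)
    (hH0 : H 0 = ⊤) (hHn : H n = ⊥)
    (hdesc : ∀ i : ℕ, i < n → H (i + 1) ≤ H i)
    (hcentral : ∀ i : ℕ, i < n → ⁅(⊤ : Subgroup Γ), H i⁆ ≤ H (i + 1))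
    (g : Fin n → Γ) (hg : ∀ i : Fin n, g i ∈ H (i : ℕ))
    (hcyc : ∀ i : Fin n, Function.Bijective fun m : ℤ =>
      (QuotientGroup.mk ((⟨g i, hg i⟩ : H (i : ℕ)) ^ m) :
        H (i : ℕ) ⧸ (H ((i : ℕ) + 1)).subgroupOf (H (i : ℕ)))) :
    ∃ t : Fin n → Fin n → Fin n → ℤ,
      Function.Bijective (N n t) ∧
      ∃ φ : G n t ≃* Γ, ∀ i : Fin n, φ (a n t i) = g i := by
  have hfactor i z hz := existsUnique_zpow_inv_mul_mem (hg i) (hcyc i) (z := z) hz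
  have hP := prodPow_bijective_of_series hH0 hHn hdesc hg hfactor
  choose t hvan ht using fun i j : Fin n =>
    (existsUnique_prodPow_of_mem hHn hdesc hg hfactor j.isLt
      (inv_mul_mul_swap_mem_of_commutator_le (hcentral j j.isLt) (g i) (hg j))).exists
  have hrels := lift_eq_one_of_mem_rels hvan fun i j _ => ht i j
  let φ : G n t →* Γ := PresentedGroup.toGroup hrels
  have hφa i : φ (a n t i) = g i := PresentedGroup.toGroup.of hrels
  have hφN : φ ∘ N n t = prodPow n g := funext fun x => by
    simp only [Function.comp_apply, N, map_prodPow, hφa]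
  rw [← hφN] at hP
  have hN : Function.Bijective (N n t) := ⟨hP.injective.of_comp, N_surjective⟩
  exact ⟨t, hN, MulEquiv.ofBijective φ ((Function.Bijective.of_comp_iff φ hN).mp hP), hφa⟩

/-- Lemma 2.1: if `Γ = H_1 ≥ ⋯ ≥ H_{n+1} = {1}` is a central series with infinite cyclic
factors generated by the images of `g_1, …, g_n`, then there is a family of integers `t`
such that `G(t)` is consistent (the normal form map `N_t` is bijective) and there is a
group isomorphism `G(t) ≅ Γ` sending `a_i` to `g_i`. -/
theorem exists_consistent_presentation {Γ : Type*} [Group Γ] (n : ℕ)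
    (H : ℕ → Subgroup Γ)
    (hH0 : H 0 = ⊤) (hHn : H n = ⊥)
    (hdesc : ∀ i : ℕ, i < n → H (i + 1) ≤ H i)
    (hnormal : ∀ i : ℕ, (H i).Normal)
    (hcentral : ∀ i : ℕ, i < n → ⁅(⊤ : Subgroup Γ), H i⁆ ≤ H (i + 1))
    (g : Fin n → Γ) (hg : ∀ i : Fin n, g i ∈ H (i : ℕ))
    (hcyc : ∀ i : Fin n, Function.Bijective fun m : ℤ =>
      (QuotientGroup.mk ((⟨g i, hg i⟩ : H (i : ℕ)) ^ m) :
        H (i : ℕ) ⧸ (H ((i : ℕ) + 1)).subgroupOf (H (i : ℕ)))) :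
    ∃ t : Fin n → Fin n → Fin n → ℤ,
      Function.Bijective (N n t) ∧
      ∃ φ : G n t ≃* Γ, ∀ i : Fin n, φ (a n t i) = g i :=
  exists_consistent_presentation_general n H hH0 hHn hdesc hcentral g hg hcyc

end HallPoly
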